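/- For all positive integers n and k, Σ_{i=1}^∞ 1/(i·(i+k)^{2n}) = H_k/k^{2n} − Σ_{i=1}^{2n−1} ζ(2n+1−i)/k^i + Σ_{i=1}^{2n−1} H_k^{(2n+1−i)}/k^i. -/

import Mathlib

open scoped BigOperators

/-- Odd harmonic number `h_k^{(n)} = ∑_{i=1}^k 1/(2i-1)^n`. -/
noncomputable def h (n k : ℕ) : ℝ := ∑ i ∈ Finset.range k, (1 : ℝ) / (2 * (i : ℝ) + 1) ^ n

/-- Generalized harmonic number `H_k^{(n)} = ∑_{i=1}^k 1/i^n`. -/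
noncomputable def H (n k : ℕ) : ℝ := ∑ i ∈ Finset.range k, (1 : ℝ) / ((i : ℝ) + 1) ^ n

/-- Riemann zeta value at a positive integer `m ≥ 2`: `ζ(m) = ∑_{n≥1} 1/n^m`. -/
noncomputable def Z (m : ℕ) : ℝ := ∑' n : ℕ+, (1 : ℝ) / ((n : ℕ) : ℝ) ^ m

/-!
Write `a_m = ∑_{i ≥ 1} 1 / (i (i + k)^m)`. Partial fractions give
`1 / (i (i + k)^(m+1)) = (1 / (i (i + k)^m) - 1 / (i + k)^(m+1)) / k`, and the tail
`∑_{i ≥ 1} 1 / (i + k)^j` equals `ζ(j) - H_k^{(j)}`, so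
`a_(m+1) = (a_m - ζ(m+1) + H_k^{(m+1)}) / k`. Unrolling this recursion from the telescoping sum
`a_1 = H_k / k` gives the formula.
-/

open Filter Finset Topology

lemma sum_Icc_one_eq_sum_range {M : Type*} [AddCommMonoid M] (f : ℕ → M) (n : ℕ) :
    ∑ i ∈ Icc 1 n, f i = ∑ i ∈ range n, f (i + 1) := by
  rw [range_eq_Ico, sum_Ico_add' f 0 n 1, zero_add, Ico_add_one_right_eq_Icc]

lemma hasSum_one_div_add_one_pow {j : ℕ} (hj : 2 ≤ j) :
    HasSum (fun i : ℕ => 1 / ((i : ℝ) + 1) ^ j) (Z j) := by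
  have hsum := (summable_nat_add_iff 1).mpr (Real.summable_one_div_nat_pow.mpr hj)
  rw [Z, tsum_pnat_eq_tsum_succ (f := fun n : ℕ => 1 / (n : ℝ) ^ j)]
  exact_mod_cast hsum.hasSum

lemma hasSum_one_div_add_one_add_pow (k : ℕ) {j : ℕ} (hj : 2 ≤ j) :
    HasSum (fun i : ℕ => 1 / ((i : ℝ) + 1 + k) ^ j) (Z j - H j k) := by
  refine ((hasSum_nat_add_iff' k).mpr (hasSum_one_div_add_one_pow hj)).congr_fun fun i => ?_
  push_cast
  ring

lemma hasSum_sub_add_of_antitone {f : ℕ → ℝ} (hf : Antitone f) (hf0 : Tendsto f atTop (𝓝 0))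
    (k : ℕ) : HasSum (fun i => f i - f (i + k)) (∑ i ∈ range k, f i) := by
  rw [hasSum_iff_tendsto_nat_of_nonneg (fun i => sub_nonneg.mpr (hf (Nat.le_add_right i k)))]
  have partial_sum (N : ℕ) :
      ∑ i ∈ range N, (f i - f (i + k)) = ∑ i ∈ range k, f i - ∑ i ∈ range k, f (N + i) := by
    have h₁ := sum_range_add f N k
    have h₂ := sum_range_add f k N
    rw [add_comm k N] at h₂
    simp only [sum_sub_distrib, add_comm _ k]
    linarith
  simp only [partial_sum]
  have hlim : Tendsto (fun N => ∑ i ∈ range k, f (N + i)) atTop (𝓝 0) := by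
    simpa using tendsto_finsetSum (range k) fun i _ => hf0.comp (tendsto_add_atTop_nat i)
  simpa using hlim.const_sub (∑ i ∈ range k, f i)

lemma hasSum_one_div_mul_add {k : ℕ} (hk : 0 < k) :
    HasSum (fun i : ℕ => 1 / (((i : ℝ) + 1) * ((i : ℝ) + 1 + k))) (H 1 k / k) := by
  have hf : Antitone fun i : ℕ => 1 / ((i : ℝ) + 1) := fun a b hab =>
    one_div_le_one_div_of_le (by positivity) (by gcongr)
  have h := (hasSum_sub_add_of_antitone hf tendsto_one_div_add_atTop_nhds_zero_nat k).div_const k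
  rw [show H 1 k = ∑ i ∈ range k, 1 / ((i : ℝ) + 1) by simp [H]]
  refine h.congr_fun fun i => ?_
  push_cast
  field_simp
  ring

lemma one_div_mul_add_pow_succ {x k : ℝ} (hx : x ≠ 0) (hk : k ≠ 0) (hxk : x + k ≠ 0) (m : ℕ) :
    1 / (x * (x + k) ^ (m + 1)) = (1 / (x * (x + k) ^ m) - 1 / (x + k) ^ (m + 1)) / k := by
  field_simp
  ring

lemma hasSum_one_div_mul_add_pow {k : ℕ} (hk : 0 < k) (m : ℕ) :
    HasSum (fun i : ℕ => 1 / (((i : ℝ) + 1) * ((i : ℝ) + 1 + k) ^ (m + 1)))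
      (H 1 k / k ^ (m + 1) - ∑ j ∈ range m, (Z (m + 1 - j) - H (m + 1 - j) k) / k ^ (j + 1)) := by
  induction m with
  | zero => simpa using hasSum_one_div_mul_add hk
  | succ m ih =>
    have hk' : (k : ℝ) ≠ 0 := by positivity
    have h := (ih.sub (hasSum_one_div_add_one_add_pow k (j := m + 2) (by omega))).div_const k
    have hvalue : H 1 k / k ^ (m + 2)
          - ∑ j ∈ range (m + 1), (Z (m + 2 - j) - H (m + 2 - j) k) / k ^ (j + 1)
        = (H 1 k / k ^ (m + 1) - ∑ j ∈ range m, (Z (m + 1 - j) - H (m + 1 - j) k) / k ^ (j + 1)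
          - (Z (m + 2) - H (m + 2) k)) / k := by
      have hshift (j : ℕ) : (Z (m + 2 - (j + 1)) - H (m + 2 - (j + 1)) k) / (k : ℝ) ^ (j + 1 + 1)
          = (Z (m + 1 - j) - H (m + 1 - j) k) / k ^ (j + 1) / k := by
        rw [show m + 2 - (j + 1) = m + 1 - j by omega, pow_succ, div_div]
      rw [sum_range_succ']
      simp only [hshift, ← sum_div, Nat.sub_zero, zero_add, pow_one]
      field_simp
      ring
    rw [hvalue]
    exact h.congr_fun fun i => one_div_mul_add_pow_succ (by positivity) hk' (by positivity) (m + 1)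

theorem stmt10 (n k : ℕ+) :
    (∑' i : ℕ+, (1 : ℝ) / (((i : ℕ) : ℝ) * (((i : ℕ) : ℝ) + ((k : ℕ) : ℝ)) ^ (2 * (n : ℕ))))
      = H 1 (k : ℕ) / ((k : ℕ) : ℝ) ^ (2 * (n : ℕ))
        - (∑ i ∈ Finset.Icc 1 (2 * (n : ℕ) - 1), Z (2 * (n : ℕ) + 1 - i) / ((k : ℕ) : ℝ) ^ i)
        + ∑ i ∈ Finset.Icc 1 (2 * (n : ℕ) - 1), H (2 * (n : ℕ) + 1 - i) (k : ℕ) / ((k : ℕ) : ℝ) ^ i := by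
  obtain ⟨m, hm⟩ : ∃ m, 2 * (n : ℕ) = m + 1 := ⟨2 * n - 1, by have := n.pos; omega⟩
  rw [tsum_pnat_eq_tsum_succ (f := fun i : ℕ => 1 / ((i : ℝ) * ((i : ℝ) + k) ^ (2 * (n : ℕ))))]
  push_cast
  rw [hm, (hasSum_one_div_mul_add_pow k.pos m).tsum_eq, Nat.add_sub_cancel,
    sum_Icc_one_eq_sum_range, sum_Icc_one_eq_sum_range]
  simp only [Nat.add_sub_add_right, sub_div, sum_sub_distrib]
  ring
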